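/- For every global run T of an L-DPN that uses locks in a nested style, and for every node v of T, the acquisition structure as=(R,RH,U,AH,A,X) of the subtree of T rooted at v is consistent: the release graph RH and the acquisition graph AH are acyclic, and (X∖R)∩(U∪A)=∅ (an initially-held lock that is never released in the subtree is neither used nor finally acquired in it). -/

import Mathlib

/-!
Common formalization infrastructure for
"Single-indexed LTL model checking for Dynamic Pushdown Networks with locks".
-/

namespace DPNFormal

/-- Actions of an L-DPN: internal action, lock acquisition, lock release. -/
inductive Act (L : Type) : Type
  | tau : Act L
  | acq : L → Act L
  | rel : L → Act L

/-- Transition rules of a DPDS: `simple a p γ p' w` is `pγ ↪ᵃ p'w`,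
`spawn a p γ p' w p₂ w₂` is `pγ ↪ᵃ p'w ▷ p₂w₂`. -/
inductive Rule (P Γ L : Type) : Type
  | simple (a : Act L) (p : P) (γ : Γ) (p' : P) (w : List Γ) : Rule P Γ L
  | spawn (a : Act L) (p : P) (γ : Γ) (p' : P) (w : List Γ) (p₂ : P) (w₂ : List Γ) : Rule P Γ L

/-- A local configuration: control state, stack content, set of held locks. -/
abbrev Conf (P Γ L : Type) := P × List Γ × Set L

/-- A Dynamic Pushdown Network with Locks (L-DPN): `n` DPDSs, each with its
set of control states, its stack alphabet and its set of rules.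
A (lock-free) DPN is the special case `L = Empty` (so all actions are `τ`). -/
structure LDPN (n : ℕ) (P Γ L : Type) where
  states : Fin n → Set P
  alph : Fin n → Set Γ
  rules : Fin n → Set (Rule P Γ L)

/-- Well-formedness of a rule of the `i`-th DPDS: the control locations belong to
`Pᵢ`, the stack symbols to `Γᵢ`, and a spawned configuration belongs to some `Pⱼ × Γⱼ*`. -/
def RuleOk {n P Γ L} (M : LDPN n P Γ L) (i : Fin n) : Rule P Γ L → Prop
  | .simple _ p γ p' w => p ∈ M.states i ∧ p' ∈ M.states i ∧ γ ∈ M.alph i ∧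
      ∀ x ∈ w, x ∈ M.alph i
  | .spawn _ p γ p' w p₂ w₂ => p ∈ M.states i ∧ p' ∈ M.states i ∧ γ ∈ M.alph i ∧
      (∀ x ∈ w, x ∈ M.alph i) ∧ ∃ j, p₂ ∈ M.states j ∧ ∀ x ∈ w₂, x ∈ M.alph j

/-- Well-formedness of an L-DPN: all components are finite, the control-state sets
are pairwise disjoint, and all rules are well-formed. -/
structure LDPN.WF {n P Γ L} (M : LDPN n P Γ L) : Prop where
  states_fin : ∀ i, (M.states i).Finite
  alph_fin : ∀ i, (M.alph i).Finite
  rules_fin : ∀ i, (M.rules i).Finite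
  disj : ∀ i j, i ≠ j → Disjoint (M.states i) (M.states j)
  rules_ok : ∀ i, ∀ ru ∈ M.rules i, RuleOk M i ru

/-- The set `D_I` of Dynamically Created Local Initial Configurations (DCLICs). -/
def LDPN.DCLICs {n P Γ L} (M : LDPN n P Γ L) : Set (Conf P Γ L) :=
  {c | ∃ i a p γ p' w p₂ w₂, Rule.spawn a p γ p' w p₂ w₂ ∈ M.rules i ∧
        c = (p₂, w₂, (∅ : Set L))}

/-! ### Global runs as (growing) binary trees -/

/-- Finite binary trees whose nodes are labelled by local configurations;
a node has either no child (a leaf), only a right child, or both children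
(left child = newly spawned instance). -/
inductive GTree (C : Type) : Type
  | leaf (c : C) : GTree C
  | node1 (c : C) (right : GTree C) : GTree C
  | node2 (c : C) (left : GTree C) (right : GTree C) : GTree C

/-- The multiset of leaves of a tree: the current global configuration. -/
def GTree.leaves {C} : GTree C → Multiset C
  | .leaf c => {c}
  | .node1 _ t => t.leaves
  | .node2 _ tl tr => tl.leaves + tr.leaves

/-- The label of the root. -/
def GTree.rootLabel {C} : GTree C → C
  | .leaf c => c
  | .node1 c _ => c
  | .node2 c _ _ => c

/-- The label of the node at a given position (positions are lists of directions
from the root; `true` = right child, `false` = left child). -/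
def GTree.label? {C} : GTree C → List Bool → Option C
  | t, [] => some t.rootLabel
  | .leaf _, _ :: _ => none
  | .node1 _ t, true :: pos => t.label? pos
  | .node1 _ _, false :: _ => none
  | .node2 _ _ tr, true :: pos => tr.label? pos
  | .node2 _ tl _, false :: pos => tl.label? pos

/-- A lock `l` is free in the tree `t` if no current instance holds it. -/
def freeIn {P Γ L} (t : GTree (Conf P Γ L)) (l : L) : Prop :=
  ∀ c ∈ t.leaves, l ∉ c.2.2

/-- One expansion step of a global run: exactly one leaf of the tree gets its
children, according to a transition rule of `M`; `freeL` is the availability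
predicate for lock acquisitions, `pos` records the position of the expanded leaf
and `a` the action of the rule used. -/
inductive ExpandA {n P Γ L} (M : LDPN n P Γ L) (freeL : L → Prop) :
    GTree (Conf P Γ L) → GTree (Conf P Γ L) → List Bool → Act L → Prop
  | simple_tau {i : Fin n} {p p' : P} {γ : Γ} {w u : List Γ} {Lk : Set L} :
      Rule.simple Act.tau p γ p' w ∈ M.rules i →
      ExpandA M freeL (.leaf (p, γ :: u, Lk))
        (.node1 (p, γ :: u, Lk) (.leaf (p', w ++ u, Lk))) [] Act.tau
  | simple_acq {i : Fin n} {p p' : P} {γ : Γ} {w u : List Γ} {Lk : Set L} {l : L} :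
      Rule.simple (Act.acq l) p γ p' w ∈ M.rules i → freeL l →
      ExpandA M freeL (.leaf (p, γ :: u, Lk))
        (.node1 (p, γ :: u, Lk) (.leaf (p', w ++ u, Lk ∪ {l}))) [] (Act.acq l)
  | simple_rel {i : Fin n} {p p' : P} {γ : Γ} {w u : List Γ} {Lk : Set L} {l : L} :
      Rule.simple (Act.rel l) p γ p' w ∈ M.rules i → l ∈ Lk →
      ExpandA M freeL (.leaf (p, γ :: u, Lk))
        (.node1 (p, γ :: u, Lk) (.leaf (p', w ++ u, Lk \ {l}))) [] (Act.rel l)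
  | spawn_tau {i : Fin n} {p p' p₂ : P} {γ : Γ} {w u w₂ : List Γ} {Lk : Set L} :
      Rule.spawn Act.tau p γ p' w p₂ w₂ ∈ M.rules i →
      ExpandA M freeL (.leaf (p, γ :: u, Lk))
        (.node2 (p, γ :: u, Lk) (.leaf (p₂, w₂, (∅ : Set L)))
          (.leaf (p', w ++ u, Lk))) [] Act.tau
  | spawn_acq {i : Fin n} {p p' p₂ : P} {γ : Γ} {w u w₂ : List Γ} {Lk : Set L} {l : L} :
      Rule.spawn (Act.acq l) p γ p' w p₂ w₂ ∈ M.rules i → freeL l →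
      ExpandA M freeL (.leaf (p, γ :: u, Lk))
        (.node2 (p, γ :: u, Lk) (.leaf (p₂, w₂, (∅ : Set L)))
          (.leaf (p', w ++ u, Lk ∪ {l}))) [] (Act.acq l)
  | spawn_rel {i : Fin n} {p p' p₂ : P} {γ : Γ} {w u w₂ : List Γ} {Lk : Set L} {l : L} :
      Rule.spawn (Act.rel l) p γ p' w p₂ w₂ ∈ M.rules i → l ∈ Lk →
      ExpandA M freeL (.leaf (p, γ :: u, Lk))
        (.node2 (p, γ :: u, Lk) (.leaf (p₂, w₂, (∅ : Set L)))
          (.leaf (p', w ++ u, Lk \ {l}))) [] (Act.rel l)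
  | in_node1 {c t t' pos a} :
      ExpandA M freeL t t' pos a →
      ExpandA M freeL (.node1 c t) (.node1 c t') (true :: pos) a
  | in_node2_left {c tl tl' tr pos a} :
      ExpandA M freeL tl tl' pos a →
      ExpandA M freeL (.node2 c tl tr) (.node2 c tl' tr) (false :: pos) a
  | in_node2_right {c tl tr tr' pos a} :
      ExpandA M freeL tr tr' pos a →
      ExpandA M freeL (.node2 c tl tr) (.node2 c tl tr') (true :: pos) a

/-- A global run of `M` from the initial global configuration `{c₀}`:
an increasing sequence of finite trees, starting with the single root `c₀`,
where at each instant the tree either stays unchanged or one leaf is expanded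
(a lock may be acquired only if it is free in the whole current tree). -/
structure GlobalRun {n P Γ L} (M : LDPN n P Γ L) (c₀ : Conf P Γ L) where
  tr : ℕ → GTree (Conf P Γ L)
  init : tr 0 = .leaf c₀
  step : ∀ k, tr (k + 1) = tr k ∨
    ∃ pos a, ExpandA M (freeIn (tr k)) (tr k) (tr (k + 1)) pos a

/-- The event at time `k` of a global run: the leaf at position `pos` is expanded
using a rule with action `a` when passing from `tr k` to `tr (k+1)`. -/
def EventAt {n P Γ L} {M : LDPN n P Γ L} {c₀ : Conf P Γ L} (r : GlobalRun M c₀)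
    (k : ℕ) (pos : List Bool) (a : Act L) : Prop :=
  ExpandA M (freeIn (r.tr k)) (r.tr k) (r.tr (k + 1)) pos a

/-- Some event happens at position `pos` with action `a` at some time. -/
def EventAtPos {n P Γ L} {M : LDPN n P Γ L} {c₀ : Conf P Γ L} (r : GlobalRun M c₀)
    (pos : List Bool) (a : Act L) : Prop :=
  ∃ k, EventAt r k pos a

/-- The node at position `pos` eventually carries label `c`. -/
def InTree {n P Γ L} {M : LDPN n P Γ L} {c₀ : Conf P Γ L} (r : GlobalRun M c₀)
    (pos : List Bool) (c : Conf P Γ L) : Prop :=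
  ∃ k, (r.tr k).label? pos = some c

/-- `m`-th position of the local run (rightmost path) starting at `q`. -/
def locpos (q : List Bool) (m : ℕ) : List Bool :=
  q ++ List.replicate m true

/-- Positions at which a local run starts: the root, or a left child
(the local initial configuration of a dynamically created instance). -/
def LocalStartPos (q : List Bool) : Prop :=
  q = [] ∨ ∃ q', q = q' ++ [false]

/-! ### Nested lock usage -/

/-- The local run starting at `q` uses locks in a nested style: there is a stack
discipline on the lock actions of this local run, i.e. every release releases the
latest acquired lock that has not yet been released. -/
def NestedLocal {n P Γ L} {M : LDPN n P Γ L} {c₀ : Conf P Γ L}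
    (r : GlobalRun M c₀) (q : List Bool) : Prop :=
  ∃ st : ℕ → List L,
    (∀ m l, EventAtPos r (locpos q m) (Act.acq l) → st (m + 1) = l :: st m) ∧
    (∀ m l, EventAtPos r (locpos q m) (Act.rel l) → st m = l :: st (m + 1)) ∧
    (∀ m, EventAtPos r (locpos q m) Act.tau → st (m + 1) = st m)

/-- A global run uses locks in a nested style iff every local run does. -/
def NestedRun {n P Γ L} {M : LDPN n P Γ L} {c₀ : Conf P Γ L} (r : GlobalRun M c₀) : Prop :=
  ∀ q, LocalStartPos q → NestedLocal r q

/-! ### LTL -/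

/-- LTL formulas. -/
inductive LTL (AP : Type) : Type
  | atom (a : AP) : LTL AP
  | neg (φ : LTL AP) : LTL AP
  | conj (φ ψ : LTL AP) : LTL AP
  | next (φ : LTL AP) : LTL AP
  | untl (φ ψ : LTL AP) : LTL AP

/-- Size of an LTL formula. -/
def LTL.size {AP} : LTL AP → ℕ
  | .atom _ => 1
  | .neg φ => φ.size + 1
  | .conj φ ψ => φ.size + ψ.size + 1
  | .next φ => φ.size + 1
  | .untl φ ψ => φ.size + ψ.size + 1

/-- Suffix of an ω-word. -/
def wshift {AP} (σ : ℕ → Set AP) (k : ℕ) : ℕ → Set AP := fun m => σ (m + k)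

/-- Satisfaction of an LTL formula by an ω-word over `2^AP`. -/
def LTL.Sat {AP} (σ : ℕ → Set AP) : LTL AP → Prop
  | .atom a => a ∈ σ 0
  | .neg φ => ¬ LTL.Sat σ φ
  | .conj φ ψ => LTL.Sat σ φ ∧ LTL.Sat σ ψ
  | .next φ => LTL.Sat (wshift σ 1) φ
  | .untl φ ψ => ∃ k, LTL.Sat (wshift σ k) ψ ∧ ∀ j, 1 ≤ j → j < k → LTL.Sat (wshift σ j) φ

/-- The global run `r` satisfies the single-indexed formula `f = ⋀ᵢ fᵢ`
w.r.t. the valuation `lam`: every local run of every instance of `Pᵢ` occurring in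
the run is infinite and its induced ω-word satisfies `fᵢ`. -/
def SatGlobal {n AP P Γ L} {M : LDPN n P Γ L} {c₀ : Conf P Γ L} (r : GlobalRun M c₀)
    (lam : AP → Set (Conf P Γ L)) (f : Fin n → LTL AP) : Prop :=
  ∀ q, LocalStartPos q → (∃ c, InTree r q c) →
    ∃ ρ : ℕ → Conf P Γ L,
      (∀ m, InTree r (locpos q m) (ρ m)) ∧
      ∀ i, (ρ 0).1 ∈ M.states i →
        LTL.Sat (fun m => {ap | ρ m ∈ lam ap}) (f i)

/-- The initial global configuration `{c₀}` satisfies `f`: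
`M` has a global run from `{c₀}` satisfying `f`. -/
def SatFrom {n AP P Γ L} (M : LDPN n P Γ L) (c₀ : Conf P Γ L)
    (lam : AP → Set (Conf P Γ L)) (f : Fin n → LTL AP) : Prop :=
  ∃ r : GlobalRun M c₀, SatGlobal r lam f

/-- The initial global configuration `{c₀}` satisfies `f` via a global run
that uses locks in a nested style. -/
def SatNested {n AP P Γ L} (M : LDPN n P Γ L) (c₀ : Conf P Γ L)
    (lam : AP → Set (Conf P Γ L)) (f : Fin n → LTL AP) : Prop :=
  ∃ r : GlobalRun M c₀, NestedRun r ∧ SatGlobal r lam f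

/-- A simple valuation: whether a local configuration satisfies an atomic
proposition depends only on its control location and its held locks. -/
def SimpleVal {AP P Γ L} (lam : AP → Set (Conf P Γ L)) : Prop :=
  ∀ ap (p : P) (w w' : List Γ) (Lk : Set L), (p, w, Lk) ∈ lam ap ↔ (p, w', Lk) ∈ lam ap

/-! ### Multi-automata -/

/-- An (L-)Multi-automaton with state space `Q`: the initial states are (the images
of) the elements of `S` (control locations, possibly paired with lock sets or
acquisition structures), and each transition is labelled by a stack symbol and a
set of DCLICs (elements of `Dc`). -/
structure MA (S Γ Dc Q : Type) where
  embed : S → Q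
  trans : Q → Γ → Set Dc → Q → Prop
  acc : Set Q

/-- The reachability relation of a multi-automaton, collecting the union of the
DCLIC-sets labelling the transitions used. -/
inductive MA.Steps {S Γ Dc Q} (A : MA S Γ Dc Q) : Q → List Γ → Set Dc → Q → Prop
  | nil (q : Q) : MA.Steps A q [] ∅ q
  | cons {q : Q} {γ : Γ} {D₁ : Set Dc} {q₁ : Q} {w : List Γ} {D₂ : Set Dc} {q₂ : Q} :
      A.trans q γ D₁ q₁ → MA.Steps A q₁ w D₂ q₂ → MA.Steps A q (γ :: w) (D₁ ∪ D₂) q₂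

/-- The language of a multi-automaton: triples `(p, ω, D)` such that from the
initial state for `p` some accepting state is reached reading `ω` while
collecting `D`. -/
def MA.Lang {S Γ Dc Q} (A : MA S Γ Dc Q) : Set (S × List Γ × Set Dc) :=
  {x | ∃ qf ∈ A.acc, A.Steps (A.embed x.1) x.2.1 x.2.2 qf}

/-- The set of transitions of a multi-automaton. -/
def MA.transSet {S Γ Dc Q} (A : MA S Γ Dc Q) : Set (Q × Γ × Set Dc × Q) :=
  {x | A.trans x.1 x.2.1 x.2.2.1 x.2.2.2}

/-- The family `Av` of (L-)multi-automata represents the valuation `lam`: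
a local configuration `(pω, L)` satisfies `ap` iff `((p,L), ω, ∅)` is accepted
by `Av ap`.  (A regular valuation is one representable in this way.) -/
def RegularVal {AP P Γ L} (Qv : Type) (Av : AP → MA (P × Set L) Γ (Conf P Γ L) Qv)
    (lam : AP → Set (Conf P Γ L)) : Prop :=
  ∀ ap (p : P) (w : List Γ) (Lk : Set L),
    (p, w, Lk) ∈ lam ap ↔ ((p, Lk), w, (∅ : Set (Conf P Γ L))) ∈ (Av ap).Lang

/-- `D_fp`: the set of DCLICs of the DPN `M` whose singleton initial global
configuration satisfies `f`. -/
def DfpSet {n AP P Γ} (M : LDPN n P Γ Empty) (lam : AP → Set (Conf P Γ Empty))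
    (f : Fin n → LTL AP) : Set (Conf P Γ Empty) :=
  {c | c ∈ M.DCLICs ∧ SatFrom M c lam f}

/-! ### Acquisition structures -/

/-- An acquisition structure `(R, RH, U, AH, A, X)`. -/
structure AcqStruct (L : Type) where
  R : Set L
  RH : Set (L × L)
  U : Set L
  AH : Set (L × L)
  A : Set L
  X : Set L

/-- Acyclicity of a directed graph on `L`. -/
def RelAcyclic {L : Type} (E : Set (L × L)) : Prop :=
  ∀ l, ¬ Relation.TransGen (fun x y => (x, y) ∈ E) l l

/-- Consistency of an acquisition structure: both graphs are acyclic and the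
held-throughout locks are neither used nor finally acquired. -/
def ASConsistent {L} (as : AcqStruct L) : Prop :=
  RelAcyclic as.RH ∧ RelAcyclic as.AH ∧ (as.X \ as.R) ∩ (as.U ∪ as.A) = ∅

/-- Compatibility of two consistent acquisition structures. -/
def ASCompatible {L} (a b : AcqStruct L) : Prop :=
  a.X ∩ b.X = ∅ ∧
  (a.A ∪ (a.X \ a.R)) ∩ (b.A ∪ (b.X \ b.R)) = ∅ ∧
  RelAcyclic (a.RH ∪ b.RH) ∧
  RelAcyclic (a.AH ∪ b.AH) ∧
  (a.A ∪ a.U) ∩ (b.X \ b.R) = ∅ ∧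
  (b.A ∪ b.U) ∩ (a.X \ a.R) = ∅

/-- Componentwise union of acquisition structures. -/
def asUnion {L} (a b : AcqStruct L) : AcqStruct L :=
  ⟨a.R ∪ b.R, a.RH ∪ b.RH, a.U ∪ b.U, a.AH ∪ b.AH, a.A ∪ b.A, a.X ∪ b.X⟩

/-- Acquisition structures form a finite type when `L` is finite. -/
def acqStructEquiv (L : Type) :
    AcqStruct L ≃ Set L × Set (L × L) × Set L × Set (L × L) × Set L × Set L where
  toFun as := (as.R, as.RH, as.U, as.AH, as.A, as.X)
  invFun x := ⟨x.1, x.2.1, x.2.2.1, x.2.2.2.1, x.2.2.2.2.1, x.2.2.2.2.2⟩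
  left_inv _ := rfl
  right_inv _ := rfl

instance {L : Type} [Finite L] : Finite (AcqStruct L) :=
  Finite.of_equiv _ (acqStructEquiv L).symm

/-- The update of an acquisition structure determined by the action of a rule:
`ASUpd a as' as` holds iff applying a rule with action `a` whose successor
acquisition structure is `as'` yields the acquisition structure `as`
(including the side conditions on `a`). -/
def ASUpd {L} : Act L → AcqStruct L → AcqStruct L → Prop
  | .tau, as', as => as = as'
  | .rel l, as', as =>
      l ∉ as'.X ∪ as'.R ∧
      as = ⟨as'.R ∪ {l}, as'.RH, as'.U, as'.AH, as'.A, as'.X ∪ {l}⟩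
  | .acq l, as', as =>
      (l ∈ as'.R ∩ as'.X ∧
        as = ⟨as'.R \ {l},
              (as'.RH \ (Set.univ ×ˢ {l})) ∪ ({l} ×ˢ (as'.R \ {l})),
              as'.U ∪ {l}, as'.AH, as'.A, as'.X \ {l}⟩) ∨
      (¬ (l ∈ as'.R ∩ as'.X) ∧ l ∉ as'.A ∧ l ∈ as'.X ∧
        as = ⟨as'.R, as'.RH, as'.U,
              as'.AH ∪ ({l} ×ˢ as'.U), as'.A ∪ {l}, as'.X \ {l}⟩)

/-- Lifting of an original rule (together with acquisition structures
`as`, `as'`, `as''`) to a rule of the product DPN. -/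
def liftRule {P Γ L} : Rule P Γ L → AcqStruct L → AcqStruct L → AcqStruct L →
    Rule (P × AcqStruct L) Γ Empty
  | .simple _ p γ p' w, as, as', _ => .simple Act.tau (p, as) γ (p', as') w
  | .spawn _ p γ p' w p₂ w₂, as, as', as'' =>
      .spawn Act.tau (p, as) γ (p', as') w (p₂, as'') w₂

/-- The side conditions under which a rule of the product DPN is generated
from an original rule and acquisition structures `as`, `as'`, `as''`. -/
def prodCond {P Γ L} : Rule P Γ L → AcqStruct L → AcqStruct L → AcqStruct L → Prop
  | .simple a _ _ _ _, as, as', _ =>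
      ASConsistent as ∧ ASConsistent as' ∧ ASUpd a as' as
  | .spawn a _ _ _ _ _ _, as, as', as'' =>
      ASConsistent as ∧ ASConsistent as' ∧ ASConsistent as'' ∧
      ASCompatible as' as'' ∧ as''.R = ∅ ∧ as''.X = ∅ ∧
      ASUpd a (asUnion as' as'') as

/-- The product DPN `M'` of an L-DPN `M` with the consistent acquisition
structures: control locations are pairs `(p, as)` with `as` consistent, and the
rules are those of `M` with the acquisition structures updated accordingly. -/
def productLDPN {n P Γ L} (M : LDPN n P Γ L) : LDPN n (P × AcqStruct L) Γ Empty where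
  states i := {q | q.1 ∈ M.states i ∧ ASConsistent q.2}
  alph i := M.alph i
  rules i := {ru | ∃ r₀ ∈ M.rules i, ∃ as as' as'',
    prodCond r₀ as as' as'' ∧ ru = liftRule r₀ as as' as''}

/-- Lifting of a valuation of the L-DPN to a valuation of the product DPN:
`(p, as)ω ∈ λ'(ap)` iff `(pω, as_X) ∈ λ(ap)`. -/
def liftVal {AP P Γ L} (lam : AP → Set (Conf P Γ L)) :
    AP → Set (Conf (P × AcqStruct L) Γ Empty) :=
  fun ap => {c | (c.1.1, c.2.1, c.1.2.X) ∈ lam ap}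

/-! ### The acquisition structure of a subtree of a global run -/

/-- Start positions of the local-run segments lying in the subtree rooted at `v`:
`v` itself, and the left children below `v`. -/
def LocalStartIn (v q : List Bool) : Prop :=
  q = v ∨ (v <+: q ∧ ∃ q', q = q' ++ [false])

/-- An initial release: a release of `l` at step `m` of the local run starting
at `q`, with no earlier acquisition of `l` in the same local run. -/
def InitRelAt {n P Γ L} {M : LDPN n P Γ L} {c₀ : Conf P Γ L} (r : GlobalRun M c₀)
    (q : List Bool) (k m : ℕ) (l : L) : Prop :=
  EventAt r k (locpos q m) (Act.rel l) ∧
  ∀ m' < m, ¬ EventAtPos r (locpos q m') (Act.acq l)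

/-- A final acquisition: an acquisition of `l` at step `m` of the local run
starting at `q`, with no later release of `l` in the same local run. -/
def FinAcqAt {n P Γ L} {M : LDPN n P Γ L} {c₀ : Conf P Γ L} (r : GlobalRun M c₀)
    (q : List Bool) (k m : ℕ) (l : L) : Prop :=
  EventAt r k (locpos q m) (Act.acq l) ∧
  ∀ m', m < m' → ¬ EventAtPos r (locpos q m') (Act.rel l)

/-- A usage of `l`: an acquisition or release of `l` that is neither a final
acquisition nor an initial release. -/
def UsageAt {n P Γ L} {M : LDPN n P Γ L} {c₀ : Conf P Γ L} (r : GlobalRun M c₀)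
    (q : List Bool) (k m : ℕ) (l : L) : Prop :=
  (EventAt r k (locpos q m) (Act.acq l) ∧ ¬ FinAcqAt r q k m l) ∨
  (EventAt r k (locpos q m) (Act.rel l) ∧ ¬ InitRelAt r q k m l)

/-- The acquisition structure of the subtree of the global run `r` rooted at
position `v`. -/
def acqStructOf {n P Γ L} {M : LDPN n P Γ L} {c₀ : Conf P Γ L} (r : GlobalRun M c₀)
    (v : List Bool) : AcqStruct L where
  R := {l | ∃ q k m, LocalStartIn v q ∧ InitRelAt r q k m l}
  RH := {lp | ∃ q k m, LocalStartIn v q ∧ InitRelAt r q k m lp.2 ∧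
          ∃ q₂ k₂ m₂, LocalStartIn v q₂ ∧ k₂ < k ∧ UsageAt r q₂ k₂ m₂ lp.1}
  U := {l | ∃ q k m, LocalStartIn v q ∧ UsageAt r q k m l}
  AH := {lp | ∃ q k m, LocalStartIn v q ∧ FinAcqAt r q k m lp.1 ∧
          ∃ q₂ k₂ m₂, LocalStartIn v q₂ ∧ k < k₂ ∧ UsageAt r q₂ k₂ m₂ lp.2}
  A := {l | ∃ q k m, LocalStartIn v q ∧ FinAcqAt r q k m l}
  X := {l | ∃ c, InTree r v c ∧ l ∈ c.2.2}


/-!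
Locks are mutually exclusive: an acquisition requires that no leaf of the current tree holds
the lock, and no other step adds a lock, so at every moment at most one leaf holds a given lock.
In particular nobody can acquire `l` while all nodes of some local run hold `l`, since that run
always ends in a leaf.

A spawned instance starts without locks, so the initial releases in the subtree at `v` happen on
the local run of `v`, which holds the lock from `v` up to the release; hence every usage of that
lock in the subtree comes after its initial release. Dually, after a final acquisition the lock
stays held along its local run, so every usage of it comes before. Along the edges of `RH`
(resp. `AH`) the times of initial releases (resp. final acquisitions) thus strictly increase,
which excludes cycles. Finally, a lock of `X ∖ R` is held by every node of the local run of `v`,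
so it is never acquired in the subtree, whereas every usage and every final acquisition involves
an acquisition.
-/

theorem RelAcyclic.of_forall_time_lt_exists_time {L : Type} {E : Set (L × L)}
    (T : L → ℕ → Prop) (hE : ∀ x y, (x, y) ∈ E → ∃ k, T y k ∧ ∀ k', T x k' → k' < k) :
    RelAcyclic E := by
  intro l hl
  have key : ∀ x y, Relation.TransGen (fun x y => (x, y) ∈ E) x y →
      ∃ k, T y k ∧ ∀ k', T x k' → k' < k := by
    intro x y hxy
    induction hxy with
    | single h => exact hE _ _ h
    | tail _ h ih =>
      obtain ⟨k, hk, hlt⟩ := ih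
      obtain ⟨k', hk', hlt'⟩ := hE _ _ h
      exact ⟨k', hk', fun j hj => (hlt j hj).trans (hlt' k hk)⟩
  obtain ⟨k, hk, hlt⟩ := key l l hl
  exact lt_irrefl k (hlt k hk)

theorem RelAcyclic.of_exists_time_lt_forall_time {L : Type} {E : Set (L × L)}
    (T : L → ℕ → Prop) (hE : ∀ x y, (x, y) ∈ E → ∃ k, T x k ∧ ∀ k', T y k' → k < k') :
    RelAcyclic E := by
  intro l hl
  have key : ∀ x y, Relation.TransGen (fun x y => (x, y) ∈ E) x y →
      ∃ k, T x k ∧ ∀ k', T y k' → k < k' := by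
    intro x y hxy
    induction hxy with
    | single h => exact hE _ _ h
    | tail _ h ih =>
      obtain ⟨k, hk, hlt⟩ := ih
      obtain ⟨k', hk', hlt'⟩ := hE _ _ h
      exact ⟨k, hk, fun j hj => (hlt k' hk').trans (hlt' j hj)⟩
  obtain ⟨k, hk, hlt⟩ := key l l hl
  exact lt_irrefl k (hlt k hk)

theorem locpos_zero (q : List Bool) : locpos q 0 = q := List.append_nil q

theorem locpos_add (q : List Bool) (i j : ℕ) :
    locpos q (i + j) = locpos q i ++ List.replicate j true := by
  rw [locpos, locpos, List.replicate_add, List.append_assoc]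

theorem locpos_locpos (q : List Bool) (i j : ℕ) : locpos (locpos q i) j = locpos q (i + j) :=
  (locpos_add q i j).symm

theorem locpos_succ (q : List Bool) (m : ℕ) : locpos q (m + 1) = locpos q m ++ [true] :=
  locpos_add q m 1

theorem LocalStartIn.prefix {v q : List Bool} (h : LocalStartIn v q) : v <+: q := by
  rcases h with rfl | ⟨h, -⟩
  exacts [List.prefix_rfl, h]

theorem LocalStartIn.prefix_locpos {v q : List Bool} (h : LocalStartIn v q) (m : ℕ) :
    v <+: locpos q m :=
  h.prefix.trans (List.prefix_append _ _)

theorem LocalStartIn.locpos_inj {v q q' : List Bool} {m m' : ℕ} (hq : LocalStartIn v q)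
    (hq' : LocalStartIn v q') (h : locpos q m = locpos q' m') : q = q' ∧ m = m' := by
  wlog hmm : m ≤ m' generalizing q q' m m'
  · exact (this hq' hq h.symm (by omega)).imp Eq.symm Eq.symm
  obtain ⟨d, rfl⟩ := Nat.exists_eq_add_of_le hmm
  rw [add_comm, ← locpos_locpos] at h
  have hq_eq : q = locpos q' d := List.append_cancel_right h
  rcases d with _ | d
  · exact ⟨hq_eq.trans (locpos_zero q'), rfl⟩
  · exfalso
    rw [locpos, List.replicate_succ', ← List.append_assoc] at hq_eq
    rcases hq with rfl | ⟨-, q'', rfl⟩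
    · have := congrArg List.length hq_eq
      have := hq'.prefix.length_le
      simp at *
      omega
    · simpa using congrArg List.getLast? hq_eq

namespace GTree

variable {C : Type}

def sub? : GTree C → List Bool → Option (GTree C)
  | t, [] => some t
  | .leaf _, _ :: _ => none
  | .node1 _ t, true :: p => t.sub? p
  | .node1 _ _, false :: _ => none
  | .node2 _ _ tr, true :: p => tr.sub? p
  | .node2 _ tl _, false :: p => tl.sub? p

theorem label?_eq_map_sub? (t : GTree C) (p : List Bool) :
    t.label? p = (t.sub? p).map rootLabel := by
  induction t generalizing p <;> rcases p with _ | ⟨_ | _, p⟩ <;> simp_all [label?, sub?]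

theorem sub?_append (t : GTree C) (p q : List Bool) :
    t.sub? (p ++ q) = (t.sub? p).bind (·.sub? q) := by
  induction t generalizing p <;> rcases p with _ | ⟨_ | _, p⟩ <;> simp_all [sub?]

variable {t : GTree C} {p : List Bool} {c : C}

theorem label?_eq_of_sub?_eq_leaf (h : t.sub? p = some (.leaf c)) : t.label? p = some c := by
  rw [label?_eq_map_sub?, h]; rfl

theorem label?_append_cons_eq_none (h : t.sub? p = some (.leaf c)) (b : Bool) (x : List Bool) :
    t.label? (p ++ b :: x) = none := by
  rw [label?_eq_map_sub?, sub?_append, h]; cases b <;> rfl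

theorem exists_label?_of_label?_append {x : List Bool} (h : t.label? (p ++ x) = some c) :
    ∃ c', t.label? p = some c' := by
  rw [label?_eq_map_sub?, sub?_append] at h
  rw [label?_eq_map_sub?]
  rcases hs : t.sub? p with _ | s
  · simp [hs] at h
  · exact ⟨s.rootLabel, rfl⟩

theorem mem_leaves_of_sub?_eq_leaf (h : t.sub? p = some (.leaf c)) : c ∈ t.leaves := by
  induction t generalizing p with
  | leaf => rcases p with _ | ⟨_ | _, p⟩ <;> simp_all [sub?, leaves]
  | node1 _ _ ih => rcases p with _ | ⟨_ | _, p⟩ <;> simp_all [sub?, leaves]; exact ih h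
  | node2 _ _ _ ihl ihr =>
    rcases p with _ | ⟨_ | _, p⟩ <;> simp_all [sub?, leaves]
    exacts [.inl (ihl h), .inr (ihr h)]

theorem exists_sub?_locpos_eq_leaf (h : t.label? p = some c) :
    ∃ j c', t.sub? (locpos p j) = some (.leaf c') := by
  suffices ∀ s : GTree C, ∃ j c', s.sub? (List.replicate j true) = some (.leaf c') by
    rw [label?_eq_map_sub?] at h
    obtain ⟨s, hs, -⟩ := Option.map_eq_some_iff.mp h
    obtain ⟨j, c', hj⟩ := this s
    exact ⟨j, c', by rw [locpos, sub?_append, hs]; exact hj⟩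
  intro s
  induction s with
  | leaf c => exact ⟨0, c, rfl⟩
  | node1 _ _ ih | node2 _ _ _ _ ih =>
    obtain ⟨j, c', hj⟩ := ih
    exact ⟨j + 1, c', hj⟩

theorem not_freeIn_of_forall_locpos {P Γ L : Type} {t : GTree (Conf P Γ L)}
    {p : List Bool} {c : Conf P Γ L} {l : L} (hp : t.label? p = some c)
    (hl : ∀ j c', t.label? (locpos p j) = some c' → l ∈ c'.2.2) : ¬ freeIn t l := fun hfree =>
  let ⟨j, c', hj⟩ := exists_sub?_locpos_eq_leaf hp
  hfree c' (mem_leaves_of_sub?_eq_leaf hj) (hl j c' (label?_eq_of_sub?_eq_leaf hj))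

end GTree

def Act.locksAfter {L : Type} : Act L → Set L → Set L
  | .tau, s => s
  | .acq l, s => s ∪ {l}
  | .rel l, s => s \ {l}

section Expansion

variable {n : ℕ} {P Γ L : Type} {M : LDPN n P Γ L} {f : L → Prop}
  {t t' : GTree (Conf P Γ L)} {pos : List Bool} {a : Act L}

theorem ExpandA.spec (h : ExpandA M f t t' pos a) :
    ∃ c c' : Conf P Γ L, t.sub? pos = some (.leaf c) ∧
      t'.sub? (pos ++ [true]) = some (.leaf c') ∧ c'.2.2 = a.locksAfter c.2.2 ∧
      (∀ l, a = .acq l → f l) ∧ (∀ l, a = .rel l → l ∈ c.2.2) ∧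
      ∀ c₂, t'.label? (pos ++ [false]) = some c₂ → c₂.2.2 = ∅ := by
  induction h <;> simp_all [GTree.sub?, GTree.label?, GTree.rootLabel, Act.locksAfter]

theorem ExpandA.label?_of_label? (h : ExpandA M f t t' pos a) {p : List Bool}
    {c : Conf P Γ L} (hp : t.label? p = some c) : t'.label? p = some c := by
  induction h generalizing p <;> rcases p with _ | ⟨_ | _, p⟩ <;>
    simp_all [GTree.label?, GTree.rootLabel]

theorem ExpandA.label?_old_or_child (h : ExpandA M f t t' pos a) {p : List Bool}
    {c : Conf P Γ L} (hp : t'.label? p = some c) :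
    t.label? p = some c ∨ p = pos ++ [true] ∨ p = pos ++ [false] := by
  induction h generalizing p with
  | in_node1 _ ih | in_node2_left _ ih | in_node2_right _ ih =>
    rcases p with _ | ⟨_ | _, p⟩ <;> simp_all [GTree.label?, GTree.rootLabel]
  | _ =>
    rcases p with _ | ⟨_ | _, _ | ⟨_ | _, p⟩⟩ <;> simp_all [GTree.label?, GTree.rootLabel]

theorem ExpandA.pos_eq (h : ExpandA M f t t' pos a) {f' : L → Prop} {pos' : List Bool}
    {a' : Act L} (h' : ExpandA M f' t t' pos' a') : pos = pos' := by
  obtain ⟨c, c', hc, hc', -⟩ := h.spec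
  rcases h'.label?_old_or_child (GTree.label?_eq_of_sub?_eq_leaf hc') with hold | heq | heq
  · simp [GTree.label?_append_cons_eq_none hc] at hold
  · exact List.append_cancel_right heq
  · simpa using congrArg List.getLast? heq

theorem ExpandA.leaves_eq (h : ExpandA M f t t' pos a) :
    ∃ (c c' : Conf P Γ L) (s sp : Multiset (Conf P Γ L)), t.leaves = c ::ₘ s ∧
      t'.leaves = sp + c' ::ₘ s ∧ c'.2.2 = a.locksAfter c.2.2 ∧ ∀ d ∈ sp, d.2.2 = ∅ := by
  induction h with
  | in_node1 _ ih => simpa [GTree.leaves] using ih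
  | @in_node2_left _ _ _ tr _ _ _ ih =>
    obtain ⟨c, c', s, sp, hs, hs', hc, hsp⟩ := ih
    exact ⟨c, c', s + tr.leaves, sp, by simp [GTree.leaves, hs],
      by simp [GTree.leaves, hs', add_assoc], hc, hsp⟩
  | @in_node2_right _ tl _ _ _ _ _ ih =>
    obtain ⟨c, c', s, sp, hs, hs', hc, hsp⟩ := ih
    exact ⟨c, c', tl.leaves + s, sp, by simp [GTree.leaves, hs],
      by simp [GTree.leaves, hs', add_left_comm], hc, hsp⟩
  | spawn_tau _ | spawn_acq _ _ | spawn_rel _ _ =>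
    exact ⟨_, _, 0, {(_, _, ∅)}, rfl, rfl, rfl, by simp⟩
  | _ => exact ⟨_, _, 0, 0, rfl, rfl, rfl, by simp⟩

section Holders

open Classical

noncomputable def GTree.holders (t : GTree (Conf P Γ L)) (l : L) : ℕ :=
  t.leaves.countP (l ∈ ·.2.2)

theorem GTree.holders_eq_zero_of_freeIn {l : L} (hl : freeIn t l) : t.holders l = 0 :=
  Multiset.countP_eq_zero.mpr hl

theorem GTree.one_le_holders {p : List Bool} {c : Conf P Γ L} {l : L}
    (h : t.sub? p = some (.leaf c)) (hl : l ∈ c.2.2) : 1 ≤ t.holders l :=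
  Multiset.countP_pos.mpr ⟨c, mem_leaves_of_sub?_eq_leaf h, hl⟩

theorem GTree.two_le_holders {p₁ p₂ : List Bool} {c₁ c₂ : Conf P Γ L} {l : L}
    (h₁ : t.sub? p₁ = some (.leaf c₁)) (h₂ : t.sub? p₂ = some (.leaf c₂)) (hne : p₁ ≠ p₂)
    (hl₁ : l ∈ c₁.2.2) (hl₂ : l ∈ c₂.2.2) : 2 ≤ t.holders l := by
  induction t generalizing p₁ p₂ with
  | leaf => rcases p₁ with _ | ⟨_ | _, _⟩ <;> rcases p₂ with _ | ⟨_ | _, _⟩ <;> simp_all [sub?]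
  | node1 _ _ ih =>
    rcases p₁ with _ | ⟨_ | _, _⟩ <;> rcases p₂ with _ | ⟨_ | _, _⟩ <;> simp_all [sub?]
    exact ih h₁ h₂ hne
  | node2 c tl tr ihl ihr =>
    have hsplit : (node2 c tl tr).holders l = tl.holders l + tr.holders l :=
      Multiset.countP_add _ _ _
    rcases p₁ with _ | ⟨_ | _, _⟩ <;> rcases p₂ with _ | ⟨_ | _, _⟩ <;> simp_all [sub?]
    · have := ihl h₁ h₂ hne; omega
    · have := one_le_holders h₁ hl₁; have := one_le_holders h₂ hl₂; omega
    · have := one_le_holders h₁ hl₁; have := one_le_holders h₂ hl₂; omega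
    · have := ihr h₁ h₂ hne; omega

theorem ExpandA.holders_le (h : ExpandA M f t t' pos a) (l : L) :
    t'.holders l ≤ t.holders l + if a = .acq l then 1 else 0 := by
  obtain ⟨c, c', s, sp, hs, hs', hc, hsp⟩ := h.leaves_eq
  have hsp0 : sp.countP (l ∈ ·.2.2) = 0 :=
    Multiset.countP_eq_zero.mpr fun d hd => by simp [hsp d hd]
  simp only [GTree.holders, hs, hs', Multiset.countP_cons, Multiset.countP_add, hsp0, hc]
  cases a <;> simp [Act.locksAfter] <;> split_ifs <;> simp_all

end Holders

end Expansion

section Run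

variable {n : ℕ} {P Γ L : Type} {M : LDPN n P Γ L} {c₀ : Conf P Γ L} {r : GlobalRun M c₀}
  {k k' : ℕ} {p : List Bool} {c c' : Conf P Γ L} {a : Act L} {l : L}

theorem GlobalRun.label?_mono (hk : k ≤ k') (h : (r.tr k).label? p = some c) :
    (r.tr k').label? p = some c := by
  induction k', hk using Nat.le_induction with
  | base => exact h
  | succ k' _ ih =>
    rcases r.step k' with he | ⟨_, _, hex⟩
    · rwa [he]
    · exact hex.label?_of_label? ih

theorem InTree.unique (h : InTree r p c) (h' : InTree r p c') : c = c' := by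
  obtain ⟨s, hs⟩ := h
  obtain ⟨s', hs'⟩ := h'
  rcases le_total s s' with hle | hle
  · exact Option.some.inj ((r.label?_mono hle hs).symm.trans hs')
  · exact Option.some.inj (hs.symm.trans (r.label?_mono hle hs'))

theorem InTree.of_sub?_eq_leaf (h : (r.tr k).sub? p = some (.leaf c)) : InTree r p c :=
  ⟨k, GTree.label?_eq_of_sub?_eq_leaf h⟩

theorem GlobalRun.exists_eventAt_of_label?_append {b : Bool} :
    (r.tr k).label? (p ++ [b]) = some c →
      ∃ k' a, EventAt r k' p a ∧ (r.tr (k' + 1)).label? (p ++ [b]) = some c := by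
  induction k with
  | zero => rw [r.init]; cases p <;> cases b <;> simp [GTree.label?]
  | succ k ih =>
    intro hc
    rcases r.step k with he | ⟨pos, a, hex⟩
    · exact ih (he ▸ hc)
    · rcases hex.label?_old_or_child hc with hold | hnew | hnew
      · exact ih hold
      all_goals
        obtain rfl := (List.append_inj' hnew rfl).1
        exact ⟨k, a, hex, hc⟩

theorem InTree.exists_of_append {x : List Bool} (h : InTree r (p ++ x) c) :
    ∃ c', InTree r p c' :=
  let ⟨s, hs⟩ := h
  let ⟨c', hc'⟩ := GTree.exists_label?_of_label?_append hs
  ⟨c', s, hc'⟩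

theorem InTree.exists_eventAt_of_append_true (h : InTree r (p ++ [true]) c') :
    ∃ k a c, EventAt r k p a ∧ InTree r p c ∧ c'.2.2 = a.locksAfter c.2.2 := by
  obtain ⟨s, hs⟩ := h
  obtain ⟨k, a, hev, hk⟩ := r.exists_eventAt_of_label?_append hs
  obtain ⟨c, c'', hc, hc'', hlocks, -⟩ := hev.spec
  obtain rfl : c'' = c' := Option.some.inj ((GTree.label?_eq_of_sub?_eq_leaf hc'').symm.trans hk)
  exact ⟨k, a, c, hev, .of_sub?_eq_leaf hc, hlocks⟩

theorem InTree.locks_eq_empty_of_append_false (h : InTree r (p ++ [false]) c) : c.2.2 = ∅ := by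
  obtain ⟨s, hs⟩ := h
  obtain ⟨k, a, hev, hk⟩ := r.exists_eventAt_of_label?_append hs
  obtain ⟨-, -, -, -, -, -, -, hspawn⟩ := hev.spec
  exact hspawn c hk

open Classical in
theorem GlobalRun.holders_le_one (r : GlobalRun M c₀) (k : ℕ) (l : L) :
    (r.tr k).holders l ≤ 1 := by
  induction k with
  | zero => rw [r.init]; exact Multiset.countP_le_card _ _
  | succ k ih =>
    rcases r.step k with he | ⟨pos, a, hex⟩
    · rwa [he]
    · have hle := hex.holders_le l
      by_cases ha : a = .acq l
      · obtain ⟨-, -, -, -, -, hfree, -⟩ := hex.spec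
        simp only [ha, if_true, GTree.holders_eq_zero_of_freeIn (hfree l ha)] at hle
        exact hle
      · simp only [ha, if_false] at hle
        omega

theorem GlobalRun.pos_eq_of_mem_locks {p₁ p₂ : List Bool} {c₁ c₂ : Conf P Γ L}
    (h₁ : (r.tr k).sub? p₁ = some (.leaf c₁)) (h₂ : (r.tr k).sub? p₂ = some (.leaf c₂))
    (hl₁ : l ∈ c₁.2.2) (hl₂ : l ∈ c₂.2.2) : p₁ = p₂ := by
  by_contra hne
  have := GTree.two_le_holders h₁ h₂ hne hl₁ hl₂
  have := r.holders_le_one k l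
  omega

theorem EventAt.freeIn_of_acq (h : EventAt r k p (.acq l)) : freeIn (r.tr k) l :=
  let ⟨_, _, _, _, _, hfree, _⟩ := h.spec
  hfree l rfl

theorem EventAt.not_mem_locks_of_acq (h : EventAt r k p (.acq l)) (hc : InTree r p c) :
    l ∉ c.2.2 := by
  obtain ⟨c', -, hc', -⟩ := h.spec
  rw [hc.unique (.of_sub?_eq_leaf hc')]
  exact h.freeIn_of_acq c' (GTree.mem_leaves_of_sub?_eq_leaf hc')

theorem EventAt.mem_locks_of_rel (h : EventAt r k p (.rel l)) (hc : InTree r p c) :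
    l ∈ c.2.2 := by
  obtain ⟨c', -, hc', -, -, -, hrel, -⟩ := h.spec
  rw [hc.unique (.of_sub?_eq_leaf hc')]
  exact hrel l rfl

theorem EventAt.not_rel_of_acq {p' : List Bool} (h : EventAt r k p (.acq l))
    (h' : EventAt r k p' (.rel l)) : False := by
  obtain rfl := ExpandA.pos_eq h h'
  obtain ⟨_, c', -, hc', hlocks, -⟩ := h.spec
  obtain ⟨_, d', -, hd', hlocks', -⟩ := h'.spec
  obtain rfl : c' = d' := by simpa [hc'] using hd'
  have hin : l ∈ c'.2.2 := by rw [hlocks]; exact .inr rfl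
  rw [hlocks'] at hin
  exact hin.2 rfl

theorem EventAt.le_of_label?_locpos {q : List Bool} {m j : ℕ}
    (h : EventAt r k (locpos q m) a) (hk : k' ≤ k) (hc : (r.tr k').label? (locpos q j) = some c) :
    j ≤ m := by
  by_contra! hmj
  obtain ⟨c'', -, hleaf, -⟩ := h.spec
  have hsplit : locpos q j = locpos q m ++ true :: List.replicate (j - (m + 1)) true := by
    rw [← List.replicate_succ, ← locpos_add]; congr 1; omega
  have hck := r.label?_mono hk (hsplit ▸ hc)
  simp [GTree.label?_append_cons_eq_none hleaf] at hck

theorem EventAt.lt_of_lt {q : List Bool} {m m' : ℕ} {a' : Act L}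
    (h : EventAt r k (locpos q m) a) (h' : EventAt r k' (locpos q m') a') (hm : m < m') :
    k < k' := by
  by_contra! hk
  obtain ⟨c, -, hc, -⟩ := h'.spec
  exact absurd (h.le_of_label?_locpos hk (GTree.label?_eq_of_sub?_eq_leaf hc)) (by omega)

theorem InTree.mem_locks_locpos_of_not_rel {q : List Bool} {i m : ℕ}
    (hc : InTree r (locpos q i) c) (hl : l ∈ c.2.2) (him : i ≤ m)
    (hrel : ∀ j, i ≤ j → j < m → ¬ EventAtPos r (locpos q j) (.rel l))
    (hc' : InTree r (locpos q m) c') : l ∈ c'.2.2 := by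
  induction m, him using Nat.le_induction generalizing c' with
  | base => rwa [← hc.unique hc']
  | succ m hm ih =>
    rw [locpos_succ] at hc'
    obtain ⟨k, a, c'', hev, hc'', hlocks⟩ := hc'.exists_eventAt_of_append_true
    have hl'' := ih (fun j hij hj => hrel j hij (by omega)) hc''
    rw [hlocks]
    cases a with
    | tau => exact hl''
    | acq => exact .inl hl''
    | rel l' =>
      refine ⟨hl'', fun (hll : l = l') => ?_⟩
      subst hll
      exact hrel m hm (by omega) ⟨k, hev⟩

theorem InTree.mem_locks_locpos_of_not_acq {q : List Bool} {m j : ℕ}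
    (hc : InTree r (locpos q m) c) (hl : l ∈ c.2.2)
    (hacq : ∀ j < m, ¬ EventAtPos r (locpos q j) (.acq l)) (hjm : j ≤ m)
    (hc' : InTree r (locpos q j) c') : l ∈ c'.2.2 := by
  induction m generalizing c with
  | zero =>
    obtain rfl : j = 0 := by omega
    rwa [hc'.unique hc]
  | succ m ih =>
    rcases Nat.lt_or_eq_of_le hjm with hjm | rfl
    · rw [locpos_succ] at hc
      obtain ⟨k, a, c'', hev, hc'', hlocks⟩ := hc.exists_eventAt_of_append_true
      refine ih hc'' ?_ (fun j hj => hacq j (by omega)) (by omega)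
      rw [hlocks] at hl
      cases a with
      | tau => exact hl
      | rel => exact hl.1
      | acq l' =>
        refine hl.resolve_right fun (hll : l = l') => ?_
        subst hll
        exact hacq m (by omega) ⟨k, hev⟩
    · rwa [hc'.unique hc]

variable {v q q₂ pos : List Bool} {m m₂ k₂ : ℕ}

theorem InitRelAt.start_eq (hq : LocalStartIn v q) (h : InitRelAt r q k m l) : q = v := by
  rcases hq with rfl | ⟨-, q', rfl⟩
  · rfl
  exfalso
  obtain ⟨c, -, hc, -⟩ := h.1.spec
  have hin : InTree r (locpos (q' ++ [false]) m) c := .of_sub?_eq_leaf hc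
  obtain ⟨c₀, hc₀⟩ := hin.exists_of_append
  have := hin.mem_locks_locpos_of_not_acq (h.1.mem_locks_of_rel hin) h.2 (Nat.zero_le m)
    (by rwa [locpos_zero])
  simp [hc₀.locks_eq_empty_of_append_false] at this

theorem InitRelAt.mem_locks {j : ℕ} (h : InitRelAt r q k m l) (hj : j ≤ m)
    (hc : InTree r (locpos q j) c) : l ∈ c.2.2 := by
  obtain ⟨c', -, hc', -⟩ := h.1.spec
  have hin : InTree r (locpos q m) c' := .of_sub?_eq_leaf hc'
  exact hin.mem_locks_locpos_of_not_acq (h.1.mem_locks_of_rel hin) h.2 hj hc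

theorem InitRelAt.lt_of_acq (h : InitRelAt r v k m l) (hacq : EventAt r k₂ pos (.acq l))
    (hpos : v <+: pos) : k < k₂ := by
  by_contra! hk
  obtain ⟨x, rfl⟩ := hpos
  obtain ⟨c₂, -, hc₂, -⟩ := hacq.spec
  obtain ⟨cv, hcv⟩ := GTree.exists_label?_of_label?_append (GTree.label?_eq_of_sub?_eq_leaf hc₂)
  refine GTree.not_freeIn_of_forall_locpos hcv (fun j c hc => ?_) hacq.freeIn_of_acq
  exact h.mem_locks (h.1.le_of_label?_locpos hk hc) ⟨k₂, hc⟩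

theorem UsageAt.exists_acq_le (hu : UsageAt r q k m l) :
    ∃ k' m', k' ≤ k ∧ EventAt r k' (locpos q m') (.acq l) := by
  rcases hu with ⟨hacq, -⟩ | ⟨hrel, hnotinit⟩
  · exact ⟨k, m, le_rfl, hacq⟩
  · obtain ⟨m', hm', k', hacq⟩ : ∃ m' < m, EventAtPos r (locpos q m') (.acq l) := by
      by_contra! hno
      exact hnotinit ⟨hrel, hno⟩
    exact ⟨k', m', (hacq.lt_of_lt hrel hm').le, hacq⟩

theorem InitRelAt.lt_of_usageAt (h : InitRelAt r v k m l) (hq₂ : LocalStartIn v q₂)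
    (hu : UsageAt r q₂ k₂ m₂ l) : k < k₂ :=
  let ⟨_, m', hk', hacq⟩ := hu.exists_acq_le
  (h.lt_of_acq hacq (hq₂.prefix_locpos m')).trans_le hk'

theorem FinAcqAt.mem_locks {j : ℕ} (h : FinAcqAt r q k m l) (hj : m < j)
    (hc : InTree r (locpos q j) c) : l ∈ c.2.2 := by
  obtain ⟨_, c₁, -, hc₁, hlocks, -⟩ := h.1.spec
  rw [← locpos_succ] at hc₁
  exact (InTree.of_sub?_eq_leaf hc₁).mem_locks_locpos_of_not_rel (by rw [hlocks]; exact .inr rfl)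
    hj (fun j' hj' _ => h.2 j' (by omega)) hc

theorem FinAcqAt.le_of_acq (h : FinAcqAt r q k m l) (hacq : EventAt r k₂ pos (.acq l)) :
    k₂ ≤ k := by
  by_contra! hk
  obtain ⟨-, c₁, -, hc₁, -⟩ := h.1.spec
  rw [← locpos_succ] at hc₁
  refine GTree.not_freeIn_of_forall_locpos
    (r.label?_mono hk (GTree.label?_eq_of_sub?_eq_leaf hc₁)) (fun j c hc => ?_) hacq.freeIn_of_acq
  rw [locpos_locpos] at hc
  exact h.mem_locks (by omega) ⟨k₂, hc⟩

theorem FinAcqAt.le_of_rel (hq : LocalStartIn v q) (hq₂ : LocalStartIn v q₂)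
    (h : FinAcqAt r q k m l) (hrel : EventAt r k₂ (locpos q₂ m₂) (.rel l)) : k₂ ≤ k := by
  by_contra! hk
  obtain ⟨-, c₁, -, hc₁, -⟩ := h.1.spec
  rw [← locpos_succ] at hc₁
  obtain ⟨j, c, hj⟩ :=
    GTree.exists_sub?_locpos_eq_leaf (r.label?_mono hk (GTree.label?_eq_of_sub?_eq_leaf hc₁))
  rw [locpos_locpos] at hj
  obtain ⟨c₂, -, hc₂, -⟩ := hrel.spec
  have hpos := r.pos_eq_of_mem_locks hj hc₂ (h.mem_locks (by omega) (.of_sub?_eq_leaf hj))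
    (hrel.mem_locks_of_rel (.of_sub?_eq_leaf hc₂))
  obtain ⟨rfl, rfl⟩ := hq.locpos_inj hq₂ hpos
  exact h.2 _ (by omega) ⟨k₂, hrel⟩

theorem UsageAt.lt_of_finAcqAt (hq₂ : LocalStartIn v q₂) (hq : LocalStartIn v q)
    (hu : UsageAt r q₂ k₂ m₂ l) (h : FinAcqAt r q k m l) : k₂ < k := by
  rcases hu with ⟨hacq, hnotfin⟩ | ⟨hrel, -⟩
  · refine (h.le_of_acq hacq).lt_of_ne fun hk => hnotfin ?_
    subst hk
    obtain ⟨rfl, rfl⟩ := hq₂.locpos_inj hq (ExpandA.pos_eq hacq h.1)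
    exact h
  · refine (h.le_of_rel hq hq₂ hrel).lt_of_ne fun hk => ?_
    subst hk
    exact h.1.not_rel_of_acq hrel

theorem not_eventAt_acq_of_mem_X_of_not_mem_R (hX : l ∈ (acqStructOf r v).X)
    (hR : l ∉ (acqStructOf r v).R) (hpos : v <+: pos) : ¬ EventAt r k pos (.acq l) := by
  classical
  obtain ⟨c, hc, hlc⟩ := hX
  rw [← locpos_zero v] at hc
  have hnorel : ∀ j, ¬ EventAtPos r (locpos v j) (.rel l) := by
    intro j hj
    have hex : ∃ j, EventAtPos r (locpos v j) (.rel l) := ⟨j, hj⟩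
    obtain ⟨k₀, hk₀⟩ := Nat.find_spec hex
    refine hR ⟨v, k₀, _, .inl rfl, hk₀, fun i hi ⟨_, hacq⟩ => ?_⟩
    obtain ⟨ci, -, hci, -⟩ := hacq.spec
    exact hacq.not_mem_locks_of_acq (.of_sub?_eq_leaf hci) <|
      hc.mem_locks_locpos_of_not_rel hlc (Nat.zero_le i)
        (fun i' _ hi' => Nat.find_min _ (hi'.trans hi)) (.of_sub?_eq_leaf hci)
  intro hacq
  obtain ⟨x, rfl⟩ := hpos
  obtain ⟨c₂, -, hc₂, -⟩ := hacq.spec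
  obtain ⟨cv, hcv⟩ := GTree.exists_label?_of_label?_append (GTree.label?_eq_of_sub?_eq_leaf hc₂)
  exact GTree.not_freeIn_of_forall_locpos hcv
    (fun j c' hc' => hc.mem_locks_locpos_of_not_rel hlc (Nat.zero_le j) (fun i _ _ => hnorel i)
      ⟨k, hc'⟩) hacq.freeIn_of_acq

theorem relAcyclic_acqStructOf_RH : RelAcyclic (acqStructOf r v).RH :=
  RelAcyclic.of_forall_time_lt_exists_time
    (fun l k => ∃ q m, LocalStartIn v q ∧ InitRelAt r q k m l)
    fun _ _ ⟨q, k, m, hq, hb, _, _, _, hq₂, hk, hu⟩ =>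
      ⟨k, ⟨q, m, hq, hb⟩, fun _ ⟨_, _, hq', ha⟩ =>
        ((ha.start_eq hq' ▸ ha).lt_of_usageAt hq₂ hu).trans hk⟩

theorem relAcyclic_acqStructOf_AH : RelAcyclic (acqStructOf r v).AH :=
  RelAcyclic.of_exists_time_lt_forall_time
    (fun l k => ∃ q m, LocalStartIn v q ∧ FinAcqAt r q k m l)
    fun _ _ ⟨q, k, m, hq, ha, _, _, _, hq₂, hk, hu⟩ =>
      ⟨k, ⟨q, m, hq, ha⟩, fun _ ⟨_, _, hq', hb⟩ => hk.trans (hu.lt_of_finAcqAt hq₂ hq' hb)⟩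

theorem acqStructOf_X_diff_R_inter_eq_empty :
    ((acqStructOf r v).X \ (acqStructOf r v).R) ∩ ((acqStructOf r v).U ∪ (acqStructOf r v).A) =
      ∅ := by
  refine Set.eq_empty_iff_forall_notMem.mpr ?_
  rintro l ⟨⟨hX, hR⟩, ⟨q, k, m, hq, hu⟩ | ⟨q, k, m, hq, hfin⟩⟩
  · obtain ⟨_, m', -, hacq⟩ := hu.exists_acq_le
    exact not_eventAt_acq_of_mem_X_of_not_mem_R hX hR (hq.prefix_locpos m') hacq
  · exact not_eventAt_acq_of_mem_X_of_not_mem_R hX hR (hq.prefix_locpos m) hfin.1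

end Run

/-- **Consistency of acquisition structures of subtrees (Statement 11).**
For every global run `T` of an L-DPN that uses locks in a nested style and every
node `v` of `T`, the acquisition structure of the subtree of `T` rooted at `v`
is consistent: its release and acquisition graphs are acyclic and
`(X∖R) ∩ (U∪A) = ∅`. -/
theorem subtree_acquisition_structure_consistent :
    ∀ (n : ℕ) (P Γ L : Type) (M : LDPN n P Γ L), M.WF →
    ∀ (c₀ : Conf P Γ L) (r : GlobalRun M c₀), NestedRun r →
    ∀ v : List Bool, (∃ c, InTree r v c) →
      ASConsistent (acqStructOf r v) := by
  intro n P Γ L M _ c₀ r _ v _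
  exact ⟨relAcyclic_acqStructOf_RH, relAcyclic_acqStructOf_AH, acqStructOf_X_diff_R_inter_eq_empty⟩

end DPNFormal
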